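/- In the one-dimensional split framework, suppose p and g are continuously differentiable on [a,b]. Fix α ∈ [0,1), define the penalized impurity decrease Δ_α(s) = (4·P(s)·(1 − P(s)))^α · Δ(s), and let s*_α ∈ [a,b] be a maximizer of Δ_α over [a,b] with Δ_α(s*_α) > 0. Then g′(s*_α) ≠ 0 and 4·P(s*_α)·(1 − P(s*_α)) ≥ ( 4^{1−α}·(1 − α)²·p(s*_α)²·Δ_α(s*_α) / g′(s*_α)² )^{1/(3+α)}, and both P(s*_α) and 1 − P(s*_α) lie in the closed interval [(1 − √(1 − r))/2, (1 + √(1 − r))/2], where r denotes ( 4^{1−α}·(1 − α)²·p(s*_α)²·Δ_α(s*_α) / g′(s*_α)² )^{1/(3+α)}. -/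

import Mathlib

/-!
Where `P(1 - P) > 0` the penalized decrease is `4^α (P(1 - P))^(α - 1) Ξ²`, and its derivative is a
positive multiple of `Ξ · F` with `F = (α - 1)(1 - 2P) Ξ + 2 P(1 - P) Ḡ`. At the interior maximizer
`Ξ ≠ 0`, so `F = 0` (first order), and `Ξ · F` cannot become positive to the right, so
`Ξ · F' ≤ 0` (second order). Eliminating `Ḡ` through `F = 0` turns this into
`(1 - α) p Ξ² ≤ -4 (P(1 - P))² g' Ξ`; hence `g' ≠ 0` and `(1 - α)² p² Ξ² ≤ 16 (P(1 - P))⁴ g'²`,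
which after substituting `Δ_α = 4 Ξ² (4P(1 - P))^(α - 1)` and `4^(1 - α) ≤ 4` is the root bound.
The interval follows from `(1 - 2P)² = 1 - 4P(1 - P) ≤ 1 - r`.
-/

open MeasureTheory Set Real Filter Topology

theorem IsLocalMax.eq_zero_and_nonpos_of_hasDerivAt_pos_mul {f c ψ : ℝ → ℝ} {x ψ' : ℝ}
    (hf : IsLocalMax f x) (hderiv : ∀ᶠ y in 𝓝 x, HasDerivAt f (c y * ψ y) y)
    (hc : ∀ᶠ y in 𝓝 x, 0 < c y) (hψ : HasDerivAt ψ ψ' x) : ψ x = 0 ∧ ψ' ≤ 0 := by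
  have hψx : ψ x = 0 :=
    (mul_eq_zero.mp (hf.hasDerivAt_eq_zero hderiv.self_of_nhds)).resolve_left hc.self_of_nhds.ne'
  refine ⟨hψx, not_lt.mp fun hψ'_pos => ?_⟩
  have hψ_right : ∀ᶠ y in 𝓝 x, x < y → 0 < ψ y := by
    have hslope := (hasDerivAt_iff_tendsto_slope_left_right.mp hψ).2.eventually
      (eventually_gt_nhds hψ'_pos)
    filter_upwards [eventually_nhdsWithin_iff.mp hslope] with y hy hxy
    simpa [hψx] using (slope_pos_iff_of_le hxy.le).mp (hy hxy)
  obtain ⟨l, u, hxlu, hlu⟩ := mem_nhds_iff_exists_Ioo_subset.mp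
    (hderiv.and (hc.and (hψ_right.and hf)))
  have hmono : StrictMonoOn f (Ico x u) := by
    refine strictMonoOn_of_deriv_pos (convex_Ico x u) (fun y hy => ?_) fun y hy => ?_
    · exact (hlu ⟨hxlu.1.trans_le hy.1, hy.2⟩).1.continuousAt.continuousWithinAt
    · rw [interior_Ico] at hy
      obtain ⟨hfy, hcy, hψy, -⟩ := hlu ⟨hxlu.1.trans hy.1, hy.2⟩
      rw [hfy.deriv]
      exact mul_pos hcy (hψy hy.1)
  obtain ⟨y, hxy, hyu⟩ := exists_between hxlu.2
  exact (hmono ⟨le_rfl, hxlu.2⟩ ⟨hxy.le, hyu⟩ hxy).not_ge (hlu ⟨hxlu.1.trans hxy, hyu⟩).2.2.2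

theorem hasDerivAt_integral_of_continuousOn_Icc {f : ℝ → ℝ} {a b s : ℝ}
    (hf : ContinuousOn f (Icc a b)) (hs : s ∈ Ioo a b) :
    HasDerivAt (fun t => ∫ u in a..t, f u) (f s) s :=
  intervalIntegral.integral_hasDerivAt_right
    ((hf.mono (uIcc_of_le hs.1.le ▸ Icc_subset_Icc_right hs.2.le)).intervalIntegrable)
    ((hf.mono Ioo_subset_Icc_self).stronglyMeasurableAtFilter isOpen_Ioo s hs)
    (hf.continuousAt (Icc_mem_nhds hs.1 hs.2))

theorem intervalIntegral_mem_Icc_zero_one {p : ℝ → ℝ} {a b s : ℝ}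
    (hp_cont : ContinuousOn p (Icc a b)) (hp_nonneg : ∀ u ∈ Icc a b, 0 ≤ p u)
    (hp_one : ∫ u in a..b, p u = 1) (hs : s ∈ Icc a b) : ∫ u in a..s, p u ∈ Icc 0 1 := by
  refine ⟨intervalIntegral.integral_nonneg hs.1 fun u hu => hp_nonneg u ⟨hu.1, hu.2.trans hs.2⟩,
    hp_one ▸ intervalIntegral.integral_mono_interval le_rfl hs.1 hs.2 ?_
      (hp_cont.intervalIntegrable_of_Icc (hs.1.trans hs.2))⟩
  filter_upwards [ae_restrict_mem measurableSet_Ioc] with u hu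
  exact hp_nonneg u (Ioc_subset_Icc_self hu)

noncomputable def penalizedDecrease (α : ℝ) (P Ξ : ℝ → ℝ) (s : ℝ) : ℝ :=
  (4 * P s * (1 - P s)) ^ α * (Ξ s ^ 2 / (P s * (1 - P s)))

def penalizedFactor (α m : ℝ) (P Ξ g : ℝ → ℝ) (s : ℝ) : ℝ :=
  (α - 1) * (1 - 2 * P s) * Ξ s + 2 * (P s * (1 - P s)) * (g s - m)

section

variable {α m ρ s : ℝ} {P Ξ g : ℝ → ℝ}

theorem hasDerivAt_penalizedDecrease (hP : HasDerivAt P ρ s)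
    (hΞ : HasDerivAt Ξ ((g s - m) * ρ) s) (hQ : P s * (1 - P s) ≠ 0) :
    HasDerivAt (penalizedDecrease α P Ξ)
      ((4 * P s * (1 - P s)) ^ α * ρ / (P s * (1 - P s)) ^ 2 *
        (Ξ s * penalizedFactor α m P Ξ g s)) s := by
  have hQ' : HasDerivAt (fun t => P t * (1 - P t)) (ρ * (1 - 2 * P s)) s :=
    (hP.fun_mul (hP.const_sub 1)).congr_deriv (by ring)
  have h4Q : HasDerivAt (fun t => 4 * P t * (1 - P t)) (4 * (ρ * (1 - 2 * P s))) s :=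
    (hQ'.const_mul 4).congr_of_eventuallyEq (Eventually.of_forall fun t => by ring)
  have h4Q_ne : 4 * P s * (1 - P s) ≠ 0 := by rw [mul_assoc]; exact mul_ne_zero four_ne_zero hQ
  refine ((h4Q.rpow_const (Or.inl h4Q_ne)).fun_mul ((hΞ.fun_pow 2).fun_div hQ' hQ)).congr_deriv ?_
  rw [rpow_sub_one h4Q_ne, penalizedFactor]
  field_simp
  ring

theorem hasDerivAt_penalizedFactor {δ : ℝ} (hP : HasDerivAt P ρ s)
    (hΞ : HasDerivAt Ξ ((g s - m) * ρ) s) (hg : HasDerivAt g δ s) :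
    HasDerivAt (penalizedFactor α m P Ξ g)
      (2 * (1 - α) * ρ * Ξ s + (1 + α) * ρ * (1 - 2 * P s) * (g s - m) +
        2 * (P s * (1 - P s)) * δ) s :=
  ((((hP.const_mul 2).const_sub 1).const_mul (α - 1)).fun_mul hΞ |>.fun_add
    (((hP.fun_mul (hP.const_sub 1)).const_mul 2).fun_mul (hg.sub_const m))).congr_deriv
    (by ring)

end

theorem ne_zero_of_penalizedDecrease_pos {α s : ℝ} {P Ξ : ℝ → ℝ}
    (hpos : 0 < penalizedDecrease α P Ξ s) : P s * (1 - P s) ≠ 0 ∧ Ξ s ≠ 0 := by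
  constructor <;> intro h <;> simp [penalizedDecrease, h] at hpos

theorem IsLocalMax.penalizedFactor_eq_zero_and_deriv_nonpos {a b α s δ : ℝ}
    {p g P M Xi : ℝ → ℝ}
    (hp_cont : ContinuousOn p (Icc a b)) (hp_pos : ∀ u ∈ Ioo a b, 0 < p u)
    (hg_cont : ContinuousOn g (Icc a b)) (hP : ∀ t, P t = ∫ u in a..t, p u)
    (hM : ∀ t, M t = ∫ u in a..t, g u * p u) (hXi : ∀ t, Xi t = M t - M b * P t)
    (hg : HasDerivAt g δ s) (hs : s ∈ Ioo a b) (hQ : 0 < P s * (1 - P s)) (hΞ : Xi s ≠ 0)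
    (hmax : IsLocalMax (penalizedDecrease α P Xi) s) :
    penalizedFactor α (M b) P Xi g s = 0 ∧
      Xi s * (2 * (1 - α) * p s * Xi s + (1 + α) * p s * (1 - 2 * P s) * (g s - M b) +
        2 * (P s * (1 - P s)) * δ) ≤ 0 := by
  have hPD : ∀ t ∈ Ioo a b, HasDerivAt P (p t) t := fun t ht =>
    (hasDerivAt_integral_of_continuousOn_Icc hp_cont ht).congr_of_eventuallyEq (.of_forall hP)
  have hMD : ∀ t ∈ Ioo a b, HasDerivAt M (g t * p t) t := fun t ht =>
    (hasDerivAt_integral_of_continuousOn_Icc (f := fun u => g u * p u) (hg_cont.mul hp_cont)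
      ht).congr_of_eventuallyEq (.of_forall hM)
  have hXiD : ∀ t ∈ Ioo a b, HasDerivAt Xi ((g t - M b) * p t) t := fun t ht =>
    (((hMD t ht).fun_sub ((hPD t ht).const_mul (M b))).congr_of_eventuallyEq
      (.of_forall hXi)).congr_deriv (by ring)
  have hnear : ∀ᶠ t in 𝓝 s, t ∈ Ioo a b ∧ 0 < P t * (1 - P t) :=
    Eventually.and (Ioo_mem_nhds hs.1 hs.2) <| ((hPD s hs).continuousAt.mul
      ((hPD s hs).continuousAt.const_sub 1)).eventually (eventually_gt_nhds hQ)
  obtain ⟨hψ, hψ'⟩ := hmax.eq_zero_and_nonpos_of_hasDerivAt_pos_mul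
    (hnear.mono fun t ht => hasDerivAt_penalizedDecrease (m := M b) (g := g) (hPD t ht.1)
      (hXiD t ht.1) ht.2.ne')
    (hnear.mono fun t ht => div_pos (mul_pos (rpow_pos_of_pos (by linarith [ht.2]) _)
      (hp_pos t ht.1)) (pow_pos ht.2 2))
    ((hXiD s hs).mul (hasDerivAt_penalizedFactor (hPD s hs) (hXiD s hs) hg))
  have hF : penalizedFactor α (M b) P Xi g s = 0 := (mul_eq_zero.mp hψ).resolve_left hΞ
  rw [hF, mul_zero, zero_add] at hψ'
  exact ⟨hF, hψ'⟩

theorem sq_mul_sq_le_sq_of_mul_sq_le {a b x : ℝ} (ha : 0 ≤ a) (h : a * x ^ 2 ≤ b * x) :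
    a ^ 2 * x ^ 2 ≤ b ^ 2 := by
  rcases lt_trichotomy x 0 with hx | rfl | hx
  · have hbax : b ≤ a * x := by nlinarith
    nlinarith [mul_nonpos_of_nonneg_of_nonpos ha hx.le]
  · simp [sq_nonneg]
  · have hax : a * x ≤ b := by nlinarith
    nlinarith [mul_nonneg ha hx.le]

theorem penalized_curvature_bound {α ρ P Ξ γ δ : ℝ} (hα0 : 0 ≤ α) (hα1 : α ≤ 1) (hρ : 0 ≤ ρ)
    (hQ : 0 ≤ P * (1 - P))
    (hF : (α - 1) * (1 - 2 * P) * Ξ + 2 * (P * (1 - P)) * γ = 0)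
    (hF' : Ξ * (2 * (1 - α) * ρ * Ξ + (1 + α) * ρ * (1 - 2 * P) * γ + 2 * (P * (1 - P)) * δ)
      ≤ 0) :
    (1 - α) ^ 2 * ρ ^ 2 * Ξ ^ 2 ≤ 16 * (P * (1 - P)) ^ 4 * δ ^ 2 := by
  set Q := P * (1 - P) with hQ_def
  have hidentity :
      2 * Q * (Ξ * (2 * (1 - α) * ρ * Ξ + (1 + α) * ρ * (1 - 2 * P) * γ + 2 * Q * δ)) =
        (1 - α) * ρ * Ξ ^ 2 * (1 + α * (1 - 4 * Q)) + 4 * Q ^ 2 * δ * Ξ := by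
    linear_combination
      (1 + α) * ρ * (1 - 2 * P) * Ξ * hF + 4 * (1 - α) * (1 + α) * ρ * Ξ ^ 2 * hQ_def
  have hlin : (1 - α) * ρ * Ξ ^ 2 ≤ -(4 * Q ^ 2 * δ) * Ξ := by
    have h4Q : 4 * Q ≤ 1 := by nlinarith [sq_nonneg (1 - 2 * P)]
    have hA : 0 ≤ (1 - α) * ρ * Ξ ^ 2 := by
      have : 0 ≤ 1 - α := by linarith
      positivity
    nlinarith [mul_nonneg hA (mul_nonneg hα0 (sub_nonneg.mpr h4Q)),
      mul_nonpos_of_nonneg_of_nonpos (mul_nonneg zero_le_two hQ) hF']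
  calc (1 - α) ^ 2 * ρ ^ 2 * Ξ ^ 2 = ((1 - α) * ρ) ^ 2 * Ξ ^ 2 := by ring
    _ ≤ (-(4 * Q ^ 2 * δ)) ^ 2 :=
      sq_mul_sq_le_sq_of_mul_sq_le (mul_nonneg (by linarith) hρ) (by linarith)
    _ = 16 * Q ^ 4 * δ ^ 2 := by ring

theorem penalized_root_le {α ρ P Ξ δ : ℝ} (hα0 : 0 ≤ α) (hQ : 0 < P * (1 - P))
    (hbound : (1 - α) ^ 2 * ρ ^ 2 * Ξ ^ 2 ≤ 16 * (P * (1 - P)) ^ 4 * δ ^ 2) :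
    ((4 : ℝ) ^ (1 - α) * (1 - α) ^ 2 * ρ ^ 2 *
        ((4 * P * (1 - P)) ^ α * (Ξ ^ 2 / (P * (1 - P)))) / δ ^ 2) ^ (1 / (3 + α))
      ≤ 4 * P * (1 - P) := by
  set Q := P * (1 - P) with hQ_def
  have hh : 4 * P * (1 - P) = 4 * Q := by ring
  rw [hh]
  have h4Q : 0 < 4 * Q := by positivity
  rw [one_div, rpow_inv_le_iff_of_pos (by positivity) h4Q.le (by linarith)]
  rcases eq_or_ne δ 0 with rfl | hδ
  · simp [rpow_nonneg h4Q.le]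
  rw [div_le_iff₀ (by positivity)]
  have h4 : (4 : ℝ) ^ (1 - α) ≤ 4 := by
    simpa using rpow_le_rpow_of_exponent_le (by norm_num : (1 : ℝ) ≤ 4) (by linarith : 1 - α ≤ 1)
  have hcore : 4 * ((1 - α) ^ 2 * ρ ^ 2 * Ξ ^ 2) / Q ≤ (4 * Q) ^ 3 * δ ^ 2 := by
    rw [div_le_iff₀ hQ]
    nlinarith
  calc (4 : ℝ) ^ (1 - α) * (1 - α) ^ 2 * ρ ^ 2 * ((4 * Q) ^ α * (Ξ ^ 2 / Q))
      ≤ 4 * (1 - α) ^ 2 * ρ ^ 2 * ((4 * Q) ^ α * (Ξ ^ 2 / Q)) := by gcongr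
    _ = (4 * Q) ^ α * (4 * ((1 - α) ^ 2 * ρ ^ 2 * Ξ ^ 2) / Q) := by ring
    _ ≤ (4 * Q) ^ α * ((4 * Q) ^ 3 * δ ^ 2) := by gcongr
    _ = (4 * Q) ^ (3 + α) * δ ^ 2 := by
      rw [rpow_add h4Q, ← rpow_natCast]
      push_cast
      ring

theorem mem_Icc_of_le_four_mul_mul_one_sub {r x : ℝ} (h : r ≤ 4 * x * (1 - x)) :
    x ∈ Icc ((1 - √(1 - r)) / 2) ((1 + √(1 - r)) / 2) := by
  have habs : |1 - 2 * x| ≤ √(1 - r) := abs_le_sqrt (by nlinarith)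
  constructor <;> linarith [abs_le.mp habs]

theorem penalized_best_split_second_order_bounds_general
    (a b : ℝ)
    (p g : ℝ → ℝ)
    (hp_cont : ContinuousOn p (Set.Icc a b))
    (hp_pos : ∀ u ∈ Set.Icc a b, 0 < p u)
    (hp_one : (∫ u in a..b, p u) = 1)
    (hg_cont : ContinuousOn g (Set.Icc a b))
    (g' : ℝ → ℝ)
    (hg' : ∀ s ∈ Set.Icc a b, HasDerivWithinAt g (g' s) (Set.Icc a b) s)
    (P M Xi Δ : ℝ → ℝ)
    (hP : ∀ s, P s = ∫ u in a..s, p u)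
    (hM : ∀ s, M s = ∫ u in a..s, g u * p u)
    (hXi : ∀ s, Xi s = M s - M b * P s)
    (hΔ : ∀ s, Δ s = Xi s ^ 2 / (P s * (1 - P s)))
    (α : ℝ) (hα0 : 0 ≤ α) (hα1 : α < 1)
    (Δα : ℝ → ℝ)
    (hΔα : ∀ s, Δα s = (4 * P s * (1 - P s)) ^ α * Δ s)
    (sα : ℝ) (hmem : sα ∈ Set.Icc a b)
    (hmax : ∀ s ∈ Set.Icc a b, Δα s ≤ Δα sα)
    (hpos : 0 < Δα sα)
    (r : ℝ)
    (hr : r = ((4 : ℝ) ^ (1 - α) * (1 - α) ^ 2 * p sα ^ 2 * Δα sα / g' sα ^ 2)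
        ^ (1 / (3 + α))) :
    g' sα ≠ 0 ∧
    r ≤ 4 * P sα * (1 - P sα) ∧
    P sα ∈ Set.Icc ((1 - Real.sqrt (1 - r)) / 2) ((1 + Real.sqrt (1 - r)) / 2) ∧
    (1 - P sα) ∈ Set.Icc ((1 - Real.sqrt (1 - r)) / 2) ((1 + Real.sqrt (1 - r)) / 2) := by
  obtain rfl : Δα = penalizedDecrease α P Xi := funext fun s => by rw [hΔα, hΔ]; rfl
  have hP01 : P sα ∈ Icc 0 1 := by
    rw [hP]
    exact intervalIntegral_mem_Icc_zero_one hp_cont (fun u hu => (hp_pos u hu).le) hp_one hmem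
  obtain ⟨hQ0, hΞ⟩ := ne_zero_of_penalizedDecrease_pos hpos
  have hQ : 0 < P sα * (1 - P sα) := (mul_nonneg hP01.1 (sub_nonneg.mpr hP01.2)).lt_of_ne' hQ0
  have hs : sα ∈ Ioo a b := by
    refine ⟨hmem.1.lt_of_ne ?_, hmem.2.lt_of_ne ?_⟩ <;> rintro rfl <;> simp [hP, hp_one] at hQ
  obtain ⟨hF, hF'⟩ := IsLocalMax.penalizedFactor_eq_zero_and_deriv_nonpos hp_cont
    (fun u hu => hp_pos u (Ioo_subset_Icc_self hu)) hg_cont hP hM hXi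
    ((hg' sα hmem).hasDerivAt (Icc_mem_nhds hs.1 hs.2)) hs hQ hΞ
    (mem_of_superset (Ioo_mem_nhds hs.1 hs.2) fun s hs' => hmax s (Ioo_subset_Icc_self hs'))
  have hbound := penalized_curvature_bound hα0 hα1.le (hp_pos sα hmem).le hQ.le hF hF'
  have hroot : r ≤ 4 * P sα * (1 - P sα) := hr ▸ penalized_root_le hα0 hQ hbound
  have hlhs : 0 < (1 - α) ^ 2 * p sα ^ 2 * Xi sα ^ 2 := by
    have := sub_pos.mpr hα1
    have := hp_pos sα hmem
    positivity
  refine ⟨fun hδ => ?_, hroot, mem_Icc_of_le_four_mul_mul_one_sub hroot,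
    mem_Icc_of_le_four_mul_mul_one_sub (hroot.trans_eq (by ring))⟩
  simp only [hδ] at hbound
  linarith

/-- For `p`, `g` continuously differentiable on `[a,b]`, `α ∈ [0,1)`,
and a maximizer `s*_α` of the penalized impurity decrease
`Δ_α(s) = (4P(s)(1−P(s)))^α Δ(s)` with `Δ_α(s*_α) > 0`: `g′(s*_α) ≠ 0`,
`4P(s*_α)(1−P(s*_α)) ≥ (4^{1−α}(1−α)² p(s*_α)² Δ_α(s*_α)/g′(s*_α)²)^{1/(3+α)}`, and both
`P(s*_α)` and `1 − P(s*_α)` lie in the corresponding closed interval. -/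
theorem penalized_best_split_second_order_bounds
    (a b : ℝ) (hab : a < b)
    (p g : ℝ → ℝ)
    (hp_cont : ContinuousOn p (Set.Icc a b))
    (hp_pos : ∀ u ∈ Set.Icc a b, 0 < p u)
    (hp_one : (∫ u in a..b, p u) = 1)
    (hg_cont : ContinuousOn g (Set.Icc a b))
    (p' g' : ℝ → ℝ)
    (hp' : ∀ s ∈ Set.Icc a b, HasDerivWithinAt p (p' s) (Set.Icc a b) s)
    (hp'_cont : ContinuousOn p' (Set.Icc a b))
    (hg' : ∀ s ∈ Set.Icc a b, HasDerivWithinAt g (g' s) (Set.Icc a b) s)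
    (hg'_cont : ContinuousOn g' (Set.Icc a b))
    (P M Xi G Δ : ℝ → ℝ)
    (hP : ∀ s, P s = ∫ u in a..s, p u)
    (hM : ∀ s, M s = ∫ u in a..s, g u * p u)
    (hXi : ∀ s, Xi s = M s - M b * P s)
    (hG : ∀ s, G s = g s - M b)
    (hΔ : ∀ s, Δ s = Xi s ^ 2 / (P s * (1 - P s)))
    (α : ℝ) (hα0 : 0 ≤ α) (hα1 : α < 1)
    (Δα : ℝ → ℝ)
    (hΔα : ∀ s, Δα s = (4 * P s * (1 - P s)) ^ α * Δ s)
    (sα : ℝ) (hmem : sα ∈ Set.Icc a b)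
    (hmax : ∀ s ∈ Set.Icc a b, Δα s ≤ Δα sα)
    (hpos : 0 < Δα sα)
    (r : ℝ)
    (hr : r = ((4 : ℝ) ^ (1 - α) * (1 - α) ^ 2 * p sα ^ 2 * Δα sα / g' sα ^ 2)
        ^ (1 / (3 + α))) :
    g' sα ≠ 0 ∧
    r ≤ 4 * P sα * (1 - P sα) ∧
    P sα ∈ Set.Icc ((1 - Real.sqrt (1 - r)) / 2) ((1 + Real.sqrt (1 - r)) / 2) ∧
    (1 - P sα) ∈ Set.Icc ((1 - Real.sqrt (1 - r)) / 2) ((1 + Real.sqrt (1 - r)) / 2) :=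
  penalized_best_split_second_order_bounds_general a b p g hp_cont hp_pos hp_one hg_cont g' hg' P M
    Xi Δ hP hM hXi hΔ α hα0 hα1 Δα hΔα sα hmem hmax hpos r hr
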